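/- arXiv:1211.4599 — 10 statements merged into one kernel-verified Lean document; each statement's English description precedes it below -/
import Mathlib

section
/- Let {f_γ : D → ℝ | γ ∈ Γ} be a downward directed family of φ-convex functions (i.e., for all γ₁,γ₂ ∈ Γ and x₁,x₂ ∈ D there exists γ ∈ Γ with f_γ(x_i) ≤ f_{γ_i}(x_i) for i = 1,2). If f(x) := inf_γ f_γ(x) > −∞ for all x ∈ D, then f is φ-convex. -/
def PhiConvexOn {X : Type*} [NormedAddCommGroup X] [NormedSpace ℝ X]
    (D : Set X) (φ : ℝ → ℝ) (f : X → ℝ) : Prop :=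
  ∀ x ∈ D, ∀ y ∈ D, ∀ t ∈ Set.Icc (0:ℝ) 1,
    f (t • x + (1 - t) • y) ≤ t * f x + (1 - t) * f y
      + t * φ ((1 - t) * ‖x - y‖) + (1 - t) * φ (t * ‖x - y‖)

theorem exists_le_ciInf_add_of_directed {Γ α : Type*} [Nonempty Γ] (f : Γ → α → ℝ) {x y : α}
    (hdir : ∀ γ₁ γ₂ : Γ, ∃ γ : Γ, f γ x ≤ f γ₁ x ∧ f γ y ≤ f γ₂ y) {ε : ℝ} (hε : 0 < ε) :
    ∃ γ, f γ x ≤ (⨅ δ, f δ x) + ε ∧ f γ y ≤ (⨅ δ, f δ y) + ε := by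
  obtain ⟨γ₁, hγ₁⟩ := exists_lt_of_ciInf_lt (lt_add_of_pos_right (⨅ δ, f δ x) hε)
  obtain ⟨γ₂, hγ₂⟩ := exists_lt_of_ciInf_lt (lt_add_of_pos_right (⨅ δ, f δ y) hε)
  obtain ⟨γ, hγx, hγy⟩ := hdir γ₁ γ₂
  exact ⟨γ, hγx.trans hγ₁.le, hγy.trans hγ₂.le⟩

theorem stmt2 {X : Type*} [NormedAddCommGroup X] [NormedSpace ℝ X]
    (D : Set X) (hD : Convex ℝ D) (φ : ℝ → ℝ)
    {Γ : Type*} [Nonempty Γ] (f : Γ → X → ℝ)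
    (hf : ∀ γ, PhiConvexOn D φ (f γ))
    (hdir : ∀ γ₁ γ₂ : Γ, ∀ x₁ ∈ D, ∀ x₂ ∈ D, ∃ γ : Γ,
      f γ x₁ ≤ f γ₁ x₁ ∧ f γ x₂ ≤ f γ₂ x₂)
    (hbdd : ∀ x ∈ D, BddBelow (Set.range fun γ => f γ x)) :
    PhiConvexOn D φ (fun x => ⨅ γ, f γ x) := by
  intro x hx y hy t ht
  have hz : t • x + (1 - t) • y ∈ D := hD hx hy ht.1 (sub_nonneg.2 ht.2) (by ring)
  refine le_of_forall_pos_le_add fun ε hε => ?_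
  obtain ⟨γ, hγx, hγy⟩ :=
    exists_le_ciInf_add_of_directed f (fun γ₁ γ₂ => hdir γ₁ γ₂ x hx y hy) hε
  have hx' := mul_le_mul_of_nonneg_left hγx ht.1
  have hy' := mul_le_mul_of_nonneg_left hγy (sub_nonneg.2 ht.2)
  calc ⨅ δ, f δ (t • x + (1 - t) • y) ≤ f γ (t • x + (1 - t) • y) := ciInf_le (hbdd _ hz) γ
    _ ≤ t * f γ x + (1 - t) * f γ y
        + t * φ ((1 - t) * ‖x - y‖) + (1 - t) * φ (t * ‖x - y‖) := hf γ x hx y hy t ht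
    _ ≤ t * (⨅ δ, f δ x) + (1 - t) * (⨅ δ, f δ y)
        + t * φ ((1 - t) * ‖x - y‖) + (1 - t) * φ (t * ‖x - y‖) + ε := by linarith
end

section
/- If f : D → ℝ satisfies |f(x) − f(y)| ≤ H·φ(‖x−y‖) for all x,y ∈ D (i.e., f is of φ-Hölder class with constant H), then f is (H·φ)-convex on D. -/
theorem PhiConvexOn.of_sub_le {X : Type*} [NormedAddCommGroup X] [NormedSpace ℝ X]
    {D : Set X} (hD : Convex ℝ D) {ω : ℝ → ℝ} {f : X → ℝ}
    (hf : ∀ x ∈ D, ∀ y ∈ D, f x - f y ≤ ω ‖x - y‖) : PhiConvexOn D ω f := by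
  rintro x hx y hy t ⟨ht0, ht1⟩
  have hz : t • x + (1 - t) • y = AffineMap.lineMap y x t := by
    rw [AffineMap.lineMap_apply_module]; abel
  have hzD : AffineMap.lineMap y x t ∈ D := hz ▸ hD hx hy ht0 (by linarith) (by ring)
  have hzx : ‖AffineMap.lineMap y x t - x‖ = (1 - t) * ‖x - y‖ := by
    rw [← dist_eq_norm, dist_lineMap_right, Real.norm_of_nonneg (by linarith), dist_comm,
      dist_eq_norm]
  have hzy : ‖AffineMap.lineMap y x t - y‖ = t * ‖x - y‖ := by
    rw [← dist_eq_norm, dist_lineMap_left, Real.norm_of_nonneg ht0, dist_comm, dist_eq_norm]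
  have h₁ := hzx ▸ hf _ hzD x hx
  have h₂ := hzy ▸ hf _ hzD y hy
  rw [hz]
  linear_combination t * h₁ + (1 - t) * h₂

theorem stmt3_general {X : Type*} [NormedAddCommGroup X] [NormedSpace ℝ X]
    (D : Set X) (hD : Convex ℝ D) (φ : ℝ → ℝ) (H : ℝ)
    (f : X → ℝ)
    (hHolder : ∀ x ∈ D, ∀ y ∈ D, |f x - f y| ≤ H * φ ‖x - y‖) :
    PhiConvexOn D (fun s => H * φ s) f :=
  PhiConvexOn.of_sub_le hD fun x hx y hy => (le_abs_self _).trans (hHolder x hx y hy)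

theorem stmt3 {X : Type*} [NormedAddCommGroup X] [NormedSpace ℝ X]
    (D : Set X) (hD : Convex ℝ D) (φ : ℝ → ℝ) (H : ℝ) (hH : 0 ≤ H)
    (f : X → ℝ)
    (hHolder : ∀ x ∈ D, ∀ y ∈ D, |f x - f y| ≤ H * φ ‖x - y‖) :
    PhiConvexOn D (fun s => H * φ s) f :=
  stmt3_general D hD φ H f hHolder
end

section
/- Let D be an open real interval, φ : D⁺ → ℝ₊, and f : D → ℝ be φ-convex. Then for all x,u,y ∈ D with x < u < y, (f(u) − f(x) − φ(u−x))/(u−x) ≤ (f(y) − f(u) + φ(y−u))/(y−u). -/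
def PhiConvexOnReal (D : Set ℝ) (φ : ℝ → ℝ) (f : ℝ → ℝ) : Prop :=
  ∀ x ∈ D, ∀ y ∈ D, ∀ t ∈ Set.Icc (0:ℝ) 1,
    f (t * x + (1 - t) * y) ≤ t * f x + (1 - t) * f y
      + t * φ ((1 - t) * |x - y|) + (1 - t) * φ (t * |x - y|)

theorem PhiConvexOnReal.mul_apply_le {D : Set ℝ} {φ f : ℝ → ℝ} (hf : PhiConvexOnReal D φ f)
    {x u y : ℝ} (hx : x ∈ D) (hy : y ∈ D) (hxu : x < u) (huy : u < y) :
    (y - x) * f u ≤ (y - u) * f x + (u - x) * f y + (y - u) * φ (u - x) + (u - x) * φ (y - u) := by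
  have hxy : 0 < y - x := by linarith
  set t := (y - u) / (y - x)
  have ht_mem : t ∈ Set.Icc (0 : ℝ) 1 :=
    ⟨div_nonneg (by linarith) hxy.le, (div_le_one hxy).mpr (by linarith)⟩
  have h_right : t * (y - x) = y - u := div_mul_cancel₀ _ hxy.ne'
  clear_value t
  have h_left : (1 - t) * (y - x) = u - x := by linear_combination -h_right
  have h_point : t * x + (1 - t) * y = u := by linear_combination -h_right
  have h_abs : |x - y| = y - x := by rw [abs_sub_comm, abs_of_pos hxy]
  have key := hf x hx y hy t ht_mem
  rw [h_point, h_abs, h_left, h_right] at key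
  calc (y - x) * f u
      ≤ (y - x) * (t * f x + (1 - t) * f y + t * φ (u - x) + (1 - t) * φ (y - u)) :=
        mul_le_mul_of_nonneg_left key hxy.le
    _ = _ := by rw [← h_left, ← h_right]; ring

theorem stmt6_general (D : Set ℝ)
    (φ : ℝ → ℝ) (f : ℝ → ℝ) (hf : PhiConvexOnReal D φ f) :
    ∀ x ∈ D, ∀ u ∈ D, ∀ y ∈ D, x < u → u < y →
      (f u - f x - φ (u - x)) / (u - x) ≤ (f y - f u + φ (y - u)) / (y - u) := by
  intro x hx u _ y hy hxu huy
  rw [div_le_div_iff₀ (by linarith) (by linarith)]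
  linear_combination hf.mul_apply_le hx hy hxu huy

theorem stmt6 (D : Set ℝ) (hDo : IsOpen D) (hDc : Convex ℝ D)
    (φ : ℝ → ℝ) (f : ℝ → ℝ) (hf : PhiConvexOnReal D φ f) :
    ∀ x ∈ D, ∀ u ∈ D, ∀ y ∈ D, x < u → u < y →
      (f u - f x - φ (u - x)) / (u - x) ≤ (f y - f u + φ (y - u)) / (y - u) :=
  stmt6_general D φ f hf
end

section
/- Let D be an open real interval and f : D → ℝ. If there exists a : D → ℝ such that f(x) − f(u) ≥ a(u)(x−u) − φ(|x−u|) for all x,u ∈ D, then f is φ-convex on D. -/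
lemma abs_sub_convexComb_left {t : ℝ} (ht : t ≤ 1) (x y : ℝ) :
    |x - (t * x + (1 - t) * y)| = (1 - t) * |x - y| := by
  rw [show x - (t * x + (1 - t) * y) = (1 - t) * (x - y) by ring, abs_mul,
    abs_of_nonneg (sub_nonneg.mpr ht)]

lemma abs_sub_convexComb_right {t : ℝ} (ht : 0 ≤ t) (x y : ℝ) :
    |y - (t * x + (1 - t) * y)| = t * |x - y| := by
  rw [show y - (t * x + (1 - t) * y) = -(t * (x - y)) by ring, abs_neg, abs_mul, abs_of_nonneg ht]

theorem stmt8_general (D : Set ℝ) (hDc : Convex ℝ D)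
    (φ : ℝ → ℝ) (f : ℝ → ℝ)
    (h : ∃ a : ℝ → ℝ, ∀ x ∈ D, ∀ u ∈ D, f x - f u ≥ a u * (x - u) - φ |x - u|) :
    PhiConvexOnReal D φ f := by
  obtain ⟨a, ha⟩ := h
  rintro x hx y hy t ⟨ht0, ht1⟩
  set u := t * x + (1 - t) * y
  have hu : u ∈ D := hDc hx hy ht0 (sub_nonneg.mpr ht1) (by ring)
  have hxu := ha x hx u hu
  have hyu := ha y hy u hu
  rw [abs_sub_convexComb_left ht1] at hxu
  rw [abs_sub_convexComb_right ht0] at hyu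
  have hlin : t * (a u * (x - u)) + (1 - t) * (a u * (y - u)) = 0 := by
    simp only [u]; ring
  linarith [mul_le_mul_of_nonneg_left hxu ht0,
    mul_le_mul_of_nonneg_left hyu (sub_nonneg.mpr ht1)]

theorem stmt8 (D : Set ℝ) (hDo : IsOpen D) (hDc : Convex ℝ D)
    (φ : ℝ → ℝ) (f : ℝ → ℝ)
    (h : ∃ a : ℝ → ℝ, ∀ x ∈ D, ∀ u ∈ D, f x - f u ≥ a u * (x - u) - φ |x - u|) :
    PhiConvexOnReal D φ f :=
  stmt8_general D hDc φ f h
end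

section
/- Let D be a convex subset of a real normed space X and f : D → ℝ. If for every u ∈ D there exists an additive function A_u : X → ℝ such that f(x) − f(u) ≥ A_u(x−u) − φ(‖x−u‖) for all x ∈ D, then f is φ-midconvex, i.e., f((x+y)/2) ≤ (f(x)+f(y))/2 + φ(‖x−y‖/2) for all x,y ∈ D. -/
/-! The additive minorant at the midpoint `u` takes opposite values at `x - u` and `y - u`,
so averaging the two support inequalities at `x` and `y` cancels it. -/

theorem le_of_additive_minorant_at_midpoint {X : Type*} [NormedAddCommGroup X] [NormedSpace ℝ X]
    {φ : ℝ → ℝ} {f : X → ℝ} (A : X →+ ℝ) {x y : X}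
    (hx : f x - f ((1/2 : ℝ) • (x + y)) ≥
      A (x - (1/2 : ℝ) • (x + y)) - φ ‖x - (1/2 : ℝ) • (x + y)‖)
    (hy : f y - f ((1/2 : ℝ) • (x + y)) ≥
      A (y - (1/2 : ℝ) • (x + y)) - φ ‖y - (1/2 : ℝ) • (x + y)‖) :
    f ((1/2 : ℝ) • (x + y)) ≤ (f x + f y) / 2 + φ (‖x - y‖ / 2) := by
  have hxu : x - (1/2 : ℝ) • (x + y) = (1/2 : ℝ) • (x - y) := by module
  have hyu : y - (1/2 : ℝ) • (x + y) = -((1/2 : ℝ) • (x - y)) := by module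
  have hnorm : ‖(1/2 : ℝ) • (x - y)‖ = ‖x - y‖ / 2 := by
    rw [norm_smul]; norm_num; ring
  rw [hxu, hnorm] at hx
  rw [hyu, map_neg, norm_neg, hnorm] at hy
  linarith

theorem stmt10 {X : Type*} [NormedAddCommGroup X] [NormedSpace ℝ X]
    (D : Set X) (hD : Convex ℝ D) (φ : ℝ → ℝ) (f : X → ℝ)
    (h : ∀ u ∈ D, ∃ A : X → ℝ, (∀ x y : X, A (x + y) = A x + A y) ∧
          ∀ x ∈ D, f x - f u ≥ A (x - u) - φ ‖x - u‖) :
    ∀ x ∈ D, ∀ y ∈ D,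
      f ((1/2 : ℝ) • (x + y)) ≤ (f x + f y) / 2 + φ (‖x - y‖ / 2) := by
  intro x hx y hy
  have hmid : (1/2 : ℝ) • (x + y) ∈ D := by
    simpa [midpoint_eq_smul_add] using hD.midpoint_mem hx hy
  obtain ⟨A, hadd, hA⟩ := h _ hmid
  exact le_of_additive_minorant_at_midpoint (AddMonoidHom.mk' A hadd) (hA x hx) (hA y hy)
end

section
/- Let φ : ℝ₊ → ℝ₊ be nondecreasing with φ(s) > 0 for s > 0 and γ := sup_{s>0} φ(2s)/φ(s) < 2. Then for all t ∈ ℝ and u ≥ 0, Σ_{n=0}^∞ φ(d_ℤ(2ⁿt)u)/2ⁿ ≤ (2/(2−γ)) · [ d_ℤ(t)·φ((1−d_ℤ(t))u) + (1−d_ℤ(t))·φ(d_ℤ(t)u) ]. -/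
/-! Since `d_ℤ(2s) ≤ 2 d_ℤ(s)` and `φ(2s) ≤ γ φ(s)`, the `n`-th term of the series is at most
`(γ/2)ⁿ φ(d_ℤ(t) u)`, so the series is bounded by `2/(2-γ) · φ(d_ℤ(t) u)`. As `d_ℤ(t) ≤ 1/2`,
monotonicity gives `φ(d_ℤ(t) u) ≤ φ((1 - d_ℤ(t)) u)`, and `φ(d_ℤ(t) u)` is then at most the
convex combination on the right-hand side. -/

noncomputable def dZ (t : ℝ) : ℝ := |t - (round t : ℤ)|

lemma dZ_nonneg (t : ℝ) : 0 ≤ dZ t := abs_nonneg _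

lemma dZ_le_half (t : ℝ) : dZ t ≤ 1 / 2 := abs_sub_round t

lemma dZ_two_mul_le (t : ℝ) : dZ (2 * t) ≤ 2 * dZ t :=
  calc dZ (2 * t) ≤ |2 * t - ((2 * round t : ℤ) : ℝ)| := round_le _ _
    _ = 2 * dZ t := by
        rw [dZ, ← abs_two, ← abs_mul]
        push_cast
        ring_nf

lemma dZ_two_pow_mul_le (t : ℝ) (n : ℕ) : dZ (2 ^ n * t) ≤ 2 ^ n * dZ t := by
  induction n with
  | zero => simp
  | succ n ih =>
      calc dZ (2 ^ (n + 1) * t) = dZ (2 * (2 ^ n * t)) := by ring_nf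
        _ ≤ 2 * dZ (2 ^ n * t) := dZ_two_mul_le _
        _ ≤ 2 * (2 ^ n * dZ t) := by gcongr
        _ = 2 ^ (n + 1) * dZ t := by ring

lemma tsum_le_of_le_geometric {f : ℕ → ℝ} {a r : ℝ} (hf : ∀ n, 0 ≤ f n)
    (hle : ∀ n, f n ≤ a * r ^ n) (hr0 : 0 ≤ r) (hr1 : r < 1) :
    ∑' n, f n ≤ a * (1 - r)⁻¹ := by
  have hg : Summable (fun n => a * r ^ n) := (summable_geometric_of_lt_one hr0 hr1).mul_left a
  calc ∑' n, f n ≤ ∑' n, a * r ^ n := (hg.of_nonneg_of_le hf hle).tsum_le_tsum hle hg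
    _ = a * (1 - r)⁻¹ := by rw [tsum_mul_left, tsum_geometric_of_lt_one hr0 hr1]

section Doubling

variable {φ : ℝ → ℝ} {γ : ℝ}

lemma le_mul_of_isLUB_ratio (hpos : ∀ s, 0 < s → 0 < φ s)
    (hγ : IsLUB {r | ∃ s, 0 < s ∧ r = φ (2 * s) / φ s} γ) {s : ℝ} (hs : 0 < s) :
    φ (2 * s) ≤ γ * φ s :=
  (div_le_iff₀ (hpos s hs)).1 (hγ.1 ⟨s, hs, rfl⟩)

lemma one_le_of_isLUB_ratio (hmono : ∀ s s', 0 ≤ s → s ≤ s' → φ s ≤ φ s')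
    (hpos : ∀ s, 0 < s → 0 < φ s)
    (hγ : IsLUB {r | ∃ s, 0 < s ∧ r = φ (2 * s) / φ s} γ) : 1 ≤ γ :=
  calc (1 : ℝ) ≤ φ (2 * 1) / φ 1 :=
        (one_le_div (hpos 1 one_pos)).2 (hmono 1 (2 * 1) zero_le_one (by norm_num))
    _ ≤ γ := hγ.1 ⟨1, one_pos, rfl⟩

lemma le_pow_mul_of_doubling (h0 : 0 ≤ φ 0) (hγ : 1 ≤ γ)
    (hdouble : ∀ s, 0 < s → φ (2 * s) ≤ γ * φ s) (n : ℕ) {s : ℝ} (hs : 0 ≤ s) :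
    φ (2 ^ n * s) ≤ γ ^ n * φ s := by
  rcases hs.eq_or_lt with rfl | hs
  · simpa using le_mul_of_one_le_left h0 (one_le_pow₀ hγ)
  induction n with
  | zero => simp
  | succ n ih =>
      calc φ (2 ^ (n + 1) * s) = φ (2 * (2 ^ n * s)) := by ring_nf
        _ ≤ γ * φ (2 ^ n * s) := hdouble _ (by positivity)
        _ ≤ γ * (γ ^ n * φ s) := by gcongr
        _ = γ ^ (n + 1) * φ s := by ring

end Doubling

theorem stmt13 (φ : ℝ → ℝ) (hnn : ∀ s, 0 ≤ s → 0 ≤ φ s)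
    (hmono : ∀ s s' : ℝ, 0 ≤ s → s ≤ s' → φ s ≤ φ s')
    (hpos : ∀ s : ℝ, 0 < s → 0 < φ s)
    (γ : ℝ) (hγ2 : γ < 2)
    (hγ : IsLUB {r : ℝ | ∃ s : ℝ, 0 < s ∧ r = φ (2 * s) / φ s} γ) :
    ∀ t : ℝ, ∀ u : ℝ, 0 ≤ u →
      (∑' n : ℕ, φ (dZ (2 ^ n * t) * u) / 2 ^ n) ≤
        (2 / (2 - γ)) *
          (dZ t * φ ((1 - dZ t) * u) + (1 - dZ t) * φ (dZ t * u)) := by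
  intro t u hu
  have hγ1 := one_le_of_isLUB_ratio hmono hpos hγ
  have hterm (n : ℕ) : φ (dZ (2 ^ n * t) * u) / 2 ^ n ≤ φ (dZ t * u) * (γ / 2) ^ n := by
    have hφ : φ (dZ (2 ^ n * t) * u) ≤ γ ^ n * φ (dZ t * u) :=
      calc φ (dZ (2 ^ n * t) * u) ≤ φ (2 ^ n * (dZ t * u)) :=
            hmono _ _ (by have := dZ_nonneg (2 ^ n * t); positivity)
              (by rw [← mul_assoc]; gcongr; exact dZ_two_pow_mul_le t n)
        _ ≤ γ ^ n * φ (dZ t * u) := le_pow_mul_of_doubling (hnn 0 le_rfl) hγ1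
            (fun s hs => le_mul_of_isLUB_ratio hpos hγ hs) n
            (mul_nonneg (dZ_nonneg t) hu)
    rw [div_pow, ← mul_div_assoc, mul_comm (φ _)]
    gcongr
  have hsum := tsum_le_of_le_geometric
    (fun n => div_nonneg (hnn _ (mul_nonneg (dZ_nonneg _) hu)) (by positivity))
    hterm (by linarith) (by linarith)
  have hconvex : φ (dZ t * u) ≤ dZ t * φ ((1 - dZ t) * u) + (1 - dZ t) * φ (dZ t * u) := by
    have hd := dZ_nonneg t
    have hd' := dZ_le_half t
    have hle : φ (dZ t * u) ≤ φ ((1 - dZ t) * u) :=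
      hmono _ _ (by positivity) (by gcongr; linarith)
    nlinarith
  calc (∑' n, φ (dZ (2 ^ n * t) * u) / 2 ^ n) ≤ φ (dZ t * u) * (1 - γ / 2)⁻¹ := hsum
    _ = 2 / (2 - γ) * φ (dZ t * u) := by field_simp
    _ ≤ _ := by gcongr
end

section
/- Let μ be a nonnegative, nonzero finite Borel measure on [0,1] and define χ(s) := (∫_{[0,1]} (2s)^p dμ(p)) / (∫_{[0,1]} s^p dμ(p)) for s > 0. Then χ is nondecreasing on (0,∞). -/
/-!
Substituting `s = exp t`, the integral `∫ s ^ p dμ` is the moment generating function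
`M t = ∫ exp (t p) dμ`, and `χ (exp t) = M (t + log 2) / M t`. By Hölder's inequality `log M` is
convex, so its increments over intervals of fixed length `log 2` grow with `t`.
-/

open MeasureTheory Real ProbabilityTheory Set

theorem ConvexOn.map_add_sub_map_le {𝕜 : Type*} [Field 𝕜] [LinearOrder 𝕜] [IsStrictOrderedRing 𝕜]
    {s : Set 𝕜} {f : 𝕜 → 𝕜} (hf : ConvexOn 𝕜 s f) {a b c : 𝕜} (ha : a ∈ s) (hbc : b + c ∈ s)
    (hab : a ≤ b) (hc : 0 ≤ c) : f (a + c) - f a ≤ f (b + c) - f b := by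
  rcases hc.eq_or_lt with rfl | hc
  · simp
  have hd : 0 < b + c - a := by linarith
  set θ := c / (b + c - a)
  have hθ₀ : 0 ≤ θ := div_nonneg hc.le hd.le
  have hθ₁ : θ ≤ 1 := (div_le_one hd).2 (by linarith)
  -- `a + c` and `b` are the convex combinations of `a` and `b + c` with swapped weights `1 - θ, θ`
  have hθd : θ * (b + c - a) = c := div_mul_cancel₀ c hd.ne'
  have h₁ := hf.2 ha hbc (sub_nonneg.2 hθ₁) hθ₀ (sub_add_cancel 1 θ)
  have h₂ := hf.2 ha hbc hθ₀ (sub_nonneg.2 hθ₁) (add_sub_cancel θ 1)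
  simp only [smul_eq_mul] at h₁ h₂
  rw [show (1 - θ) * a + θ * (b + c) = a + c by linear_combination hθd] at h₁
  rw [show θ * a + (1 - θ) * (b + c) = b by linear_combination -hθd] at h₂
  linarith

namespace ProbabilityTheory

variable {Ω : Type*} {m : MeasurableSpace Ω} {X : Ω → ℝ} {μ : Measure Ω}

theorem mgf_mul_add_mul_le {x y a b : ℝ} (hx : x ∈ integrableExpSet X μ)
    (hy : y ∈ integrableExpSet X μ) (ha : 0 ≤ a) (hb : 0 ≤ b) (hab : a + b = 1) :
    mgf X μ (a * x + b * y) ≤ mgf X μ x ^ a * mgf X μ y ^ b := by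
  have hxy : a * x + b * y ∈ integrableExpSet X μ := convex_integrableExpSet hx hy ha hb hab
  have hofReal : ∀ t ∈ integrableExpSet X μ,
      ENNReal.ofReal (mgf X μ t) = ∫⁻ ω, ENNReal.ofReal (exp (t * X ω)) ∂μ := fun t ht =>
    ofReal_integral_eq_lintegral_ofReal ht (ae_of_all _ fun _ => (exp_pos _).le)
  have hexp : ∀ ω, ENNReal.ofReal (exp (x * X ω)) ^ a * ENNReal.ofReal (exp (y * X ω)) ^ b =
      ENNReal.ofReal (exp ((a * x + b * y) * X ω)) := by
    intro ω
    rw [ENNReal.ofReal_rpow_of_pos (exp_pos _), ENNReal.ofReal_rpow_of_pos (exp_pos _),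
      ← ENNReal.ofReal_mul (by positivity), ← exp_mul, ← exp_mul, ← exp_add]
    ring_nf
  have hholder := ENNReal.lintegral_mul_norm_pow_le hx.aemeasurable.ennreal_ofReal
    hy.aemeasurable.ennreal_ofReal ha hb hab
  simp only [hexp, ← hofReal _ hx, ← hofReal _ hy, ← hofReal _ hxy] at hholder
  rwa [ENNReal.ofReal_rpow_of_nonneg mgf_nonneg ha, ENNReal.ofReal_rpow_of_nonneg mgf_nonneg hb,
    ← ENNReal.ofReal_mul (rpow_nonneg mgf_nonneg a),
    ENNReal.ofReal_le_ofReal_iff (mul_nonneg (rpow_nonneg mgf_nonneg a) (rpow_nonneg mgf_nonneg b))]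
    at hholder

theorem convexOn_cgf : ConvexOn ℝ (integrableExpSet X μ) (cgf X μ) := by
  refine ⟨convex_integrableExpSet, fun x hx y hy a b ha hb hab => ?_⟩
  rcases eq_zero_or_neZero μ with rfl | _
  · simp [cgf]
  have hpos : ∀ t ∈ integrableExpSet X μ, 0 < mgf X μ t := fun t ht => mgf_pos' (NeZero.ne μ) ht
  simp only [smul_eq_mul, cgf]
  calc log (mgf X μ (a * x + b * y))
      ≤ log (mgf X μ x ^ a * mgf X μ y ^ b) :=
        log_le_log (hpos _ (convex_integrableExpSet hx hy ha hb hab))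
          (mgf_mul_add_mul_le hx hy ha hb hab)
    _ = a * log (mgf X μ x) + b * log (mgf X μ y) := by
        rw [log_mul (rpow_pos_of_pos (hpos x hx) a).ne' (rpow_pos_of_pos (hpos y hy) b).ne',
          log_rpow (hpos x hx), log_rpow (hpos y hy)]

theorem monotone_mgf_add_div_mgf [NeZero μ] (hX : integrableExpSet X μ = univ) {c : ℝ}
    (hc : 0 ≤ c) : Monotone fun t => mgf X μ (t + c) / mgf X μ t := by
  intro a b hab
  have hint : ∀ t, Integrable (fun ω => exp (t * X ω)) μ := fun t =>
    show t ∈ integrableExpSet X μ from hX ▸ mem_univ t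
  have hcgf := (hX ▸ convexOn_cgf).map_add_sub_map_le (mem_univ a) (mem_univ (b + c)) hab hc
  dsimp only
  rw [div_le_div_iff₀ (mgf_pos' (NeZero.ne μ) (hint a)) (mgf_pos' (NeZero.ne μ) (hint b)),
    ← exp_cgf (hint a), ← exp_cgf (hint b), ← exp_cgf (hint (a + c)), ← exp_cgf (hint (b + c)),
    ← exp_add, ← exp_add, exp_le_exp]
  linarith

end ProbabilityTheory

theorem integrableExpSet_id_restrict_Icc (μ : Measure ℝ) [IsFiniteMeasureOnCompacts μ] (a b : ℝ) :
    integrableExpSet id (μ.restrict (Icc a b)) = univ :=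
  eq_univ_of_forall fun _ => (continuous_const.mul continuous_id).rexp.integrableOn_Icc

theorem integral_rpow_eq_mgf_log (ν : Measure ℝ) {s : ℝ} (hs : 0 < s) :
    ∫ p, s ^ p ∂ν = mgf id ν (log s) := by
  simp only [mgf, id, rpow_def_of_pos hs]

theorem stmt14 (μ : Measure ℝ) [IsFiniteMeasure μ] (hμ : μ ≠ 0)
    (hsupp : μ (Set.Icc (0:ℝ) 1)ᶜ = 0) :
    ∀ s₁ s₂ : ℝ, 0 < s₁ → s₁ ≤ s₂ →
      (∫ p in Set.Icc (0:ℝ) 1, (2 * s₁) ^ p ∂μ) /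
        (∫ p in Set.Icc (0:ℝ) 1, s₁ ^ p ∂μ) ≤
      (∫ p in Set.Icc (0:ℝ) 1, (2 * s₂) ^ p ∂μ) /
        (∫ p in Set.Icc (0:ℝ) 1, s₂ ^ p ∂μ) := by
  intro s₁ s₂ hs₁ h12
  have hrestrict : μ.restrict (Icc 0 1) = μ := Measure.restrict_eq_self_of_ae_mem (ae_iff.2 hsupp)
  have : NeZero μ := ⟨hμ⟩
  have hX : integrableExpSet id μ = univ := hrestrict ▸ integrableExpSet_id_restrict_Icc μ 0 1
  have hratio : ∀ s, 0 < s → (∫ p, (2 * s) ^ p ∂μ) / ∫ p, s ^ p ∂μ =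
      mgf id μ (log s + log 2) / mgf id μ (log s) := fun s hs => by
    rw [integral_rpow_eq_mgf_log μ hs, integral_rpow_eq_mgf_log μ (by positivity),
      log_mul two_ne_zero hs.ne', add_comm]
  rw [hrestrict, hratio s₁ hs₁, hratio s₂ (hs₁.trans_le h12)]
  exact monotone_mgf_add_div_mgf hX (log_nonneg one_le_two) (log_le_log hs₁ h12)
end

section
/- Let μ be a nonnegative, nonzero finite Borel measure on [0,1], p₀ := sup(supp μ), and χ(s) := (∫_{[0,1]} (2s)^p dμ(p)) / (∫_{[0,1]} s^p dμ(p)). Then lim_{s→∞} χ(s) = 2^{p₀}. -/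
/-!
The ratio is the mean of `2 ^ p` under the probability measures `s ^ p dμ(p) / ∫ s ^ p dμ`,
and `2 ^ p ≤ 2 ^ p₀` for `μ`-a.e. `p`. For `q < r < p₀` the support meets `(r, ∞)`, so
`μ (r, ∞) > 0` and these measures give mass `O(s ^ (q - r))` to `p ≤ q`: they concentrate on
`(q, p₀]`, where `2 ^ p > 2 ^ q`.
-/

open MeasureTheory Filter

def measSupp (μ : Measure ℝ) : Set ℝ :=
  {x : ℝ | ∀ U : Set ℝ, IsOpen U → x ∈ U → 0 < μ U}

open Set Topology

theorem measSupp_eq_support (μ : Measure ℝ) : measSupp μ = μ.support := by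
  rw [Measure.support_eq_forall_isOpen]
  ext x
  exact forall_congr' fun U => imp.swap

namespace MeasureTheory.Measure

theorem ae_le_sSup_support {μ : Measure ℝ} (hbdd : BddAbove μ.support) :
    ∀ᵐ p ∂μ, p ≤ sSup μ.support :=
  mem_of_superset μ.support_mem_ae fun _ hp => le_csSup hbdd hp

theorem measure_Ioi_pos_of_lt_sSup_support {μ : Measure ℝ} (hμ : μ ≠ 0) {q : ℝ}
    (hq : q < sSup μ.support) : 0 < μ (Ioi q) := by
  obtain ⟨x, hx, hqx⟩ := exists_lt_of_lt_csSup (μ.nonempty_support hμ) hq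
  exact (μ.mem_support_iff_forall x).mp hx _ (Ioi_mem_nhds hqx)

end MeasureTheory.Measure

section RpowIntegrals

variable {ν : Measure ℝ} {s q c p₀ : ℝ}

theorem integral_mul_rpow_le_rpow_mul_integral (hc : 1 ≤ c) (hs : 0 < s)
    (hint : ∀ s : ℝ, 0 < s → Integrable (fun p : ℝ => s ^ p) ν) (hle : ∀ᵐ p ∂ν, p ≤ p₀) :
    ∫ p, (c * s) ^ p ∂ν ≤ c ^ p₀ * ∫ p, s ^ p ∂ν := by
  rw [← integral_const_mul]
  refine integral_mono_ae (hint _ (by positivity)) ((hint s hs).const_mul _) ?_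
  filter_upwards [hle] with p hp
  rw [Real.mul_rpow (by linarith) hs.le]
  exact mul_le_mul_of_nonneg_right (Real.rpow_le_rpow_of_exponent_le hc hp) (by positivity)

theorem mul_sub_le_integral_mul_rpow (hc : 1 ≤ c) (hs : 0 < s)
    (hint : ∀ s : ℝ, 0 < s → Integrable (fun p : ℝ => s ^ p) ν) :
    c ^ q * ((∫ p, s ^ p ∂ν) - ∫ p in Iic q, s ^ p ∂ν) ≤ ∫ p, (c * s) ^ p ∂ν := by
  rw [← integral_add_compl measurableSet_Iic (hint s hs), add_sub_cancel_left, compl_Iic,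
    ← integral_const_mul]
  calc ∫ p in Ioi q, c ^ q * s ^ p ∂ν ≤ ∫ p in Ioi q, (c * s) ^ p ∂ν := by
        refine setIntegral_mono_on ((hint s hs).const_mul _).integrableOn
          (hint _ (by positivity)).integrableOn measurableSet_Ioi fun p hp => ?_
        rw [Real.mul_rpow (by linarith) hs.le]
        exact mul_le_mul_of_nonneg_right (Real.rpow_le_rpow_of_exponent_le hc (le_of_lt hp))
          (by positivity)
    _ ≤ ∫ p, (c * s) ^ p ∂ν :=
        setIntegral_le_integral (hint _ (by positivity))
          (ae_of_all _ fun p => Real.rpow_nonneg (by positivity) p)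

variable [IsFiniteMeasure ν]

theorem setIntegral_Iic_rpow_le (hs : 1 ≤ s) (hint : Integrable (fun p => s ^ p) ν) :
    ∫ p in Iic q, s ^ p ∂ν ≤ ν.real (Iic q) * s ^ q := by
  calc ∫ p in Iic q, s ^ p ∂ν ≤ ∫ _ in Iic q, s ^ q ∂ν :=
        setIntegral_mono_on hint.integrableOn (integrable_const _) measurableSet_Iic
          fun p hp => Real.rpow_le_rpow_of_exponent_le hs hp
    _ = ν.real (Iic q) * s ^ q := by rw [setIntegral_const, smul_eq_mul]

theorem measureReal_Ioi_mul_rpow_le_integral (hs : 1 ≤ s)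
    (hint : Integrable (fun p => s ^ p) ν) :
    ν.real (Ioi q) * s ^ q ≤ ∫ p, s ^ p ∂ν :=
  calc ν.real (Ioi q) * s ^ q ≤ ∫ p in Ioi q, s ^ p ∂ν :=
        setIntegral_ge_of_const_le measurableSet_Ioi (measure_ne_top _ _)
          (fun p hp => Real.rpow_le_rpow_of_exponent_le hs (le_of_lt hp)) hint.integrableOn
    _ ≤ ∫ p, s ^ p ∂ν :=
        setIntegral_le_integral hint (ae_of_all _ fun p => Real.rpow_nonneg (by linarith) p)

theorem integral_rpow_pos (hs : 1 ≤ s) (hint : Integrable (fun p => s ^ p) ν)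
    (hq : 0 < ν (Ioi q)) : 0 < ∫ p, s ^ p ∂ν :=
  lt_of_lt_of_le (mul_pos (ENNReal.toReal_pos hq.ne' (measure_ne_top _ _)) (by positivity))
    (measureReal_Ioi_mul_rpow_le_integral hs hint)

theorem tendsto_setIntegral_Iic_rpow_div_integral_rpow
    (hint : ∀ s : ℝ, 0 < s → Integrable (fun p : ℝ => s ^ p) ν) {r : ℝ} (hqr : q < r)
    (hr : 0 < ν (Ioi r)) :
    Tendsto (fun s : ℝ => (∫ p in Iic q, s ^ p ∂ν) / ∫ p, s ^ p ∂ν) atTop (𝓝 0) := by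
  have hbound : Tendsto (fun s : ℝ => ν.real (Iic q) / ν.real (Ioi r) * s ^ (-(r - q)))
      atTop (𝓝 0) := by
    simpa using (tendsto_rpow_neg_atTop (sub_pos.mpr hqr)).const_mul _
  refine tendsto_of_tendsto_of_tendsto_of_le_of_le' tendsto_const_nhds hbound ?_ ?_
  · filter_upwards [eventually_ge_atTop 1] with s hs
    exact div_nonneg (setIntegral_nonneg measurableSet_Iic fun p _ => by positivity)
      (integral_rpow_pos hs (hint s (by linarith)) hr).le
  · filter_upwards [eventually_ge_atTop 1] with s hs
    have hs0 : 0 < s := by linarith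
    have hm : 0 < ν.real (Ioi r) := ENNReal.toReal_pos hr.ne' (measure_ne_top _ _)
    calc (∫ p in Iic q, s ^ p ∂ν) / ∫ p, s ^ p ∂ν
        ≤ (ν.real (Iic q) * s ^ q) / (ν.real (Ioi r) * s ^ r) :=
          div_le_div₀ (by positivity) (setIntegral_Iic_rpow_le hs (hint s hs0))
            (by positivity) (measureReal_Ioi_mul_rpow_le_integral hs (hint s hs0))
      _ = ν.real (Iic q) / ν.real (Ioi r) * s ^ (-(r - q)) := by
          rw [neg_sub, Real.rpow_sub hs0]
          field_simp

theorem tendsto_integral_mul_rpow_div_integral_rpow (hc : 1 ≤ c)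
    (hint : ∀ s : ℝ, 0 < s → Integrable (fun p : ℝ => s ^ p) ν) (hle : ∀ᵐ p ∂ν, p ≤ p₀)
    (hpos : ∀ q < p₀, 0 < ν (Ioi q)) :
    Tendsto (fun s : ℝ => (∫ p, (c * s) ^ p ∂ν) / ∫ p, s ^ p ∂ν) atTop (𝓝 (c ^ p₀)) := by
  refine tendsto_order.2 ⟨fun a ha => ?_, fun a ha => ?_⟩
  · obtain ⟨r, hr, har⟩ := ((Real.continuousAt_const_rpow (by positivity)).eventually
      (lt_mem_nhds ha)).exists_lt
    obtain ⟨q, hq, haq⟩ := ((Real.continuousAt_const_rpow (by positivity)).eventually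
      (lt_mem_nhds har)).exists_lt
    have hlim : Tendsto (fun s : ℝ => c ^ q * (1 - (∫ p in Iic q, s ^ p ∂ν) / ∫ p, s ^ p ∂ν))
        atTop (𝓝 (c ^ q)) := by
      simpa using ((tendsto_setIntegral_Iic_rpow_div_integral_rpow hint hq
        (hpos r hr)).const_sub 1).const_mul (c ^ q)
    filter_upwards [hlim.eventually (lt_mem_nhds haq), eventually_ge_atTop 1] with s has hs
    have hJ := integral_rpow_pos hs (hint s (by linarith)) (hpos r hr)
    refine has.trans_le ?_
    rw [one_sub_div hJ.ne', mul_div_assoc', div_le_div_iff_of_pos_right hJ]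
    exact mul_sub_le_integral_mul_rpow hc (by linarith) hint
  · filter_upwards [eventually_ge_atTop 1] with s hs
    have hJ := integral_rpow_pos hs (hint s (by linarith)) (hpos (p₀ - 1) (by linarith))
    exact ((div_le_iff₀ hJ).mpr
      (integral_mul_rpow_le_rpow_mul_integral hc (by linarith) hint hle)).trans_lt ha

end RpowIntegrals

theorem stmt15 (μ : Measure ℝ) [IsFiniteMeasure μ] (hμ : μ ≠ 0)
    (hsupp : μ (Set.Icc (0:ℝ) 1)ᶜ = 0)
    (p₀ : ℝ) (hp₀ : p₀ = sSup (measSupp μ)) :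
    Tendsto (fun s : ℝ =>
        (∫ p in Set.Icc (0:ℝ) 1, (2 * s) ^ p ∂μ) /
          (∫ p in Set.Icc (0:ℝ) 1, s ^ p ∂μ))
      atTop (nhds ((2:ℝ) ^ p₀)) := by
  have hμI : μ.restrict (Icc 0 1) = μ := Measure.restrict_eq_self_of_ae_mem hsupp
  have hint : ∀ s : ℝ, 0 < s → Integrable (fun p : ℝ => s ^ p) μ := fun s hs => by
    rw [← hμI]
    exact (Real.continuous_const_rpow hs.ne').continuousOn.integrableOn_compact isCompact_Icc
  have hbdd : BddAbove μ.support :=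
    bddAbove_Icc.mono (μ.support_subset_of_isClosed isClosed_Icc hsupp)
  rw [hμI, hp₀, measSupp_eq_support]
  exact tendsto_integral_mul_rpow_div_integral_rpow one_le_two hint
    (μ.ae_le_sSup_support hbdd) fun q hq => μ.measure_Ioi_pos_of_lt_sSup_support hμ hq
end

section
/- For every constant 0 ≤ p ≤ 1 and all t ∈ [0,1], t(1−t)^p + (1−t)t^p ≤ T_p(t), where T_p(t) := Σ_{n=0}^∞ (d_ℤ(2ⁿt))^p / 2ⁿ and d_ℤ(s) := dist(s,ℤ). -/
/-!
Write `F(t) = t(1-t)^p + (1-t)t^p`. Since `x ↦ x^p` is subadditive for `0 ≤ p ≤ 1`,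
`(1-t)^p ≤ (1-2t)^p + t^p`, which gives `F(t) ≤ t^p + F(2t)/2` for `t ≤ 1/2`; by the symmetry
`F(1-t) = F(t)` this becomes `F(t) ≤ d_ℤ(t)^p + F(2t mod 1)/2` on all of `[0,1)`. The function
`T_p` satisfies this recursion with equality, so iterating it `N` times bounds `F(t)` by the
`N`-th partial sum of `T_p(t)` plus `F(2^N t mod 1)/2^N ≤ 2^{-N}`.
-/

theorem le_sum_range_add_of_le_add_half {f g : ℝ → ℝ} (h : ∀ x, f x ≤ g x + f (2 * x) / 2)
    (x : ℝ) (N : ℕ) :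
    f x ≤ ∑ n ∈ Finset.range N, g (2 ^ n * x) / 2 ^ n + f (2 ^ N * x) / 2 ^ N := by
  induction N with
  | zero => simp
  | succ N ih =>
    calc f x ≤ ∑ n ∈ Finset.range N, g (2 ^ n * x) / 2 ^ n + f (2 ^ N * x) / 2 ^ N := ih
      _ ≤ ∑ n ∈ Finset.range N, g (2 ^ n * x) / 2 ^ n
          + (g (2 ^ N * x) + f (2 * (2 ^ N * x)) / 2) / 2 ^ N := by gcongr; exact h _
      _ = _ := by rw [Finset.sum_range_succ, pow_succ, ← mul_assoc, mul_comm 2]; ring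

theorem le_tsum_of_le_add_half {f g : ℝ → ℝ} {C : ℝ} (h : ∀ x, f x ≤ g x + f (2 * x) / 2)
    (hfC : ∀ x, f x ≤ C) (hg : ∀ x, 0 ≤ g x) {x : ℝ}
    (hsum : Summable fun n : ℕ => g (2 ^ n * x) / 2 ^ n) :
    f x ≤ ∑' n : ℕ, g (2 ^ n * x) / 2 ^ n := by
  have hN (N : ℕ) : f x ≤ ∑' n : ℕ, g (2 ^ n * x) / 2 ^ n + C / 2 ^ N :=
    calc f x ≤ ∑ n ∈ Finset.range N, g (2 ^ n * x) / 2 ^ n + f (2 ^ N * x) / 2 ^ N :=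
          le_sum_range_add_of_le_add_half h x N
      _ ≤ ∑' n : ℕ, g (2 ^ n * x) / 2 ^ n + C / 2 ^ N := by
          gcongr
          · exact hsum.sum_le_tsum _ fun n _ => div_nonneg (hg _) (by positivity)
          · exact hfC _
  have hlim : Filter.Tendsto (fun N : ℕ => ∑' n : ℕ, g (2 ^ n * x) / 2 ^ n + C / 2 ^ N)
      Filter.atTop (nhds (∑' n : ℕ, g (2 ^ n * x) / 2 ^ n)) := by
    simpa using tendsto_const_nhds.add (tendsto_const_nhds.div_atTop
      (tendsto_pow_atTop_atTop_of_one_lt (one_lt_two : (1 : ℝ) < 2)))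
  exact ge_of_tendsto' hlim hN

lemma dZ_eq_min (t : ℝ) : dZ t = min (Int.fract t) (1 - Int.fract t) :=
  abs_sub_round_eq_min t

lemma summable_dZ_rpow_div_two_pow {p : ℝ} (hp : 0 ≤ p) (t : ℝ) :
    Summable fun n : ℕ => dZ (2 ^ n * t) ^ p / 2 ^ n := by
  refine summable_geometric_two.of_nonneg_of_le
    (fun n => div_nonneg (Real.rpow_nonneg (dZ_nonneg _) p) (by positivity)) fun n => ?_
  have hd : dZ (2 ^ n * t) ^ p ≤ 1 :=
    Real.rpow_le_one (dZ_nonneg _) ((dZ_le_half _).trans (by norm_num)) hp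
  calc dZ (2 ^ n * t) ^ p / 2 ^ n ≤ 1 / 2 ^ n := by gcongr
    _ = (1 / 2) ^ n := by rw [one_div_pow]

noncomputable def takagiMinorant (p t : ℝ) : ℝ := t * (1 - t) ^ p + (1 - t) * t ^ p

lemma takagiMinorant_one_sub (p t : ℝ) : takagiMinorant p (1 - t) = takagiMinorant p t := by
  rw [takagiMinorant, takagiMinorant, sub_sub_cancel]
  ring

lemma takagiMinorant_le_one {p t : ℝ} (hp : 0 ≤ p) (h0 : 0 ≤ t) (h1 : t ≤ 1) :
    takagiMinorant p t ≤ 1 := by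
  have e1 : t * (1 - t) ^ p ≤ t :=
    mul_le_of_le_one_right h0 (Real.rpow_le_one (by linarith) (by linarith) hp)
  have e2 : (1 - t) * t ^ p ≤ 1 - t :=
    mul_le_of_le_one_right (by linarith) (Real.rpow_le_one h0 h1 hp)
  rw [takagiMinorant]
  linarith

lemma takagiMinorant_le_of_le_half {p t : ℝ} (hp0 : 0 ≤ p) (hp1 : p ≤ 1) (h0 : 0 ≤ t)
    (h1 : t ≤ 1 / 2) : takagiMinorant p t ≤ t ^ p + takagiMinorant p (2 * t) / 2 := by
  have hsub : (1 - t) ^ p ≤ (1 - 2 * t) ^ p + t ^ p := by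
    simpa [show 1 - 2 * t + t = 1 - t by ring] using
      Real.rpow_add_le_add_rpow (by linarith : 0 ≤ 1 - 2 * t) h0 hp0 hp1
  have hrest : 0 ≤ (1 - 2 * t) * (2 * t) ^ p :=
    mul_nonneg (by linarith) (Real.rpow_nonneg (by linarith) p)
  rw [takagiMinorant, takagiMinorant]
  nlinarith [mul_le_mul_of_nonneg_left hsub h0]

lemma takagiMinorant_fract_le {p : ℝ} (hp0 : 0 ≤ p) (hp1 : p ≤ 1) (s : ℝ) :
    takagiMinorant p (Int.fract s) ≤
      dZ s ^ p + takagiMinorant p (Int.fract (2 * s)) / 2 := by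
  set u := Int.fract s with hu
  have hu0 : 0 ≤ u := Int.fract_nonneg s
  have hu1 : u < 1 := Int.fract_lt_one s
  have hfract : Int.fract (2 * s) = Int.fract (2 * u) :=
    Int.fract_eq_fract.2 ⟨2 * ⌊s⌋, by rw [hu, Int.fract]; push_cast; ring⟩
  rw [dZ_eq_min, ← hu, hfract]
  rcases lt_or_ge u (1 / 2) with h | h
  · rw [min_eq_left (by linarith), Int.fract_eq_self.2 ⟨by linarith, by linarith⟩]
    exact takagiMinorant_le_of_le_half hp0 hp1 hu0 h.le
  · have hfract2 : Int.fract (2 * u) = 1 - 2 * (1 - u) := by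
      rw [← Int.fract_sub_one, Int.fract_eq_self.2 ⟨by linarith, by linarith⟩]
      ring
    rw [min_eq_right (by linarith), hfract2, takagiMinorant_one_sub, ← takagiMinorant_one_sub p u]
    exact takagiMinorant_le_of_le_half hp0 hp1 (by linarith) (by linarith)

theorem stmt17 (p : ℝ) (hp0 : 0 ≤ p) (hp1 : p ≤ 1) :
    ∀ t ∈ Set.Icc (0:ℝ) 1,
      t * (1 - t) ^ p + (1 - t) * t ^ p ≤
        ∑' n : ℕ, (dZ (2 ^ n * t)) ^ p / 2 ^ n := by
  rintro t ⟨ht0, ht1⟩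
  have hfract : takagiMinorant p (Int.fract t) = takagiMinorant p t := by
    rcases ht1.lt_or_eq with h | rfl
    · rw [Int.fract_eq_self.2 ⟨ht0, h⟩]
    · rw [Int.fract_one, ← takagiMinorant_one_sub, sub_zero]
  rw [← takagiMinorant, ← hfract]
  exact le_tsum_of_le_add_half (f := fun x => takagiMinorant p (Int.fract x))
    (takagiMinorant_fract_le hp0 hp1)
    (fun x => takagiMinorant_le_one hp0 (Int.fract_nonneg x) (Int.fract_lt_one x).le)
    (fun x => Real.rpow_nonneg (dZ_nonneg x) p) (summable_dZ_rpow_div_two_pow hp0 t)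
end

section
/- For every constant 0 ≤ p < 1 and all t ∈ [0,1], T_p(t) ≤ (2/(2−2^p)) · ( t(1−t)^p + (1−t)t^p ), where T_p(t) := Σ_{n=0}^∞ (d_ℤ(2ⁿt))^p / 2ⁿ and d_ℤ(s) := dist(s,ℤ). -/
lemma dZ_le_abs_sub_intCast (t : ℝ) (k : ℤ) : dZ t ≤ |t - k| := round_le t k

lemma dZ_natCast_mul_le {t : ℝ} (ht : t ∈ Set.Icc (0 : ℝ) 1) (n : ℕ) :
    dZ (n * t) ≤ n * min t (1 - t) := by
  obtain ⟨ht0, ht1⟩ := ht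
  rcases min_cases t (1 - t) with ⟨hmin, -⟩ | ⟨hmin, -⟩ <;> rw [hmin]
  · simpa [abs_of_nonneg (by positivity : (0 : ℝ) ≤ n * t)] using dZ_le_abs_sub_intCast (n * t) 0
  · calc dZ (n * t) ≤ |n * t - ((n : ℤ) : ℝ)| := dZ_le_abs_sub_intCast _ _
      _ = n * (1 - t) := by
        rw [Int.cast_natCast, abs_sub_comm, abs_of_nonneg (by nlinarith)]
        ring

lemma two_pow_mul_rpow_div_two_pow {a : ℝ} (ha : 0 ≤ a) (p : ℝ) (n : ℕ) :
    ((2 : ℝ) ^ n * a) ^ p / 2 ^ n = a ^ p * (2 ^ p / 2) ^ n := by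
  rw [Real.mul_rpow (by positivity) ha, ← Real.rpow_natCast_mul zero_le_two, mul_comm (n : ℝ),
    Real.rpow_mul zero_le_two, Real.rpow_natCast, div_pow]
  ring

lemma hasSum_mul_two_rpow_div_two_pow {p : ℝ} (hp : p < 1) (a : ℝ) :
    HasSum (fun n : ℕ => a * (2 ^ p / 2) ^ n) (a * (2 / (2 - 2 ^ p))) := by
  have h2p : (2 : ℝ) ^ p < 2 := Real.rpow_lt_self_of_one_lt one_lt_two hp
  have hr : (2 : ℝ) ^ p / 2 < 1 := by rwa [div_lt_one two_pos]
  have := (hasSum_geometric_of_lt_one (by positivity) hr).mul_left a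
  rwa [one_sub_div two_ne_zero, inv_div] at this

lemma min_rpow_le_mul_rpow_add_mul_rpow {t p : ℝ} (ht : t ∈ Set.Icc (0 : ℝ) 1) (hp : 0 ≤ p) :
    min t (1 - t) ^ p ≤ t * (1 - t) ^ p + (1 - t) * t ^ p := by
  obtain ⟨ht0, ht1⟩ := ht
  have hm : 0 ≤ min t (1 - t) := le_min ht0 (by linarith)
  have h1 : min t (1 - t) ^ p ≤ (1 - t) ^ p := Real.rpow_le_rpow hm (min_le_right _ _) hp
  have h2 : min t (1 - t) ^ p ≤ t ^ p := Real.rpow_le_rpow hm (min_le_left _ _) hp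
  calc min t (1 - t) ^ p = t * min t (1 - t) ^ p + (1 - t) * min t (1 - t) ^ p := by ring
    _ ≤ t * (1 - t) ^ p + (1 - t) * t ^ p := by gcongr

lemma dZ_two_pow_mul_rpow_div_le {t p : ℝ} (ht : t ∈ Set.Icc (0 : ℝ) 1) (hp : 0 ≤ p) (n : ℕ) :
    dZ (2 ^ n * t) ^ p / 2 ^ n ≤ min t (1 - t) ^ p * (2 ^ p / 2) ^ n := by
  have hm : 0 ≤ min t (1 - t) := le_min ht.1 (by linarith [ht.2])
  have hd : dZ (2 ^ n * t) ≤ 2 ^ n * min t (1 - t) := by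
    simpa using dZ_natCast_mul_le ht (2 ^ n)
  rw [← two_pow_mul_rpow_div_two_pow hm]
  gcongr
  exact dZ_nonneg _

lemma tsum_dZ_two_pow_mul_rpow_div_le {t p : ℝ} (ht : t ∈ Set.Icc (0 : ℝ) 1) (hp0 : 0 ≤ p)
    (hp1 : p < 1) :
    ∑' n : ℕ, dZ (2 ^ n * t) ^ p / 2 ^ n ≤ min t (1 - t) ^ p * (2 / (2 - 2 ^ p)) := by
  have hgeo := hasSum_mul_two_rpow_div_two_pow hp1 (min t (1 - t) ^ p)
  have hle := dZ_two_pow_mul_rpow_div_le ht hp0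
  have hnonneg (n : ℕ) : 0 ≤ dZ (2 ^ n * t) ^ p / 2 ^ n := by
    have := Real.rpow_nonneg (dZ_nonneg (2 ^ n * t)) p
    positivity
  rw [← hgeo.tsum_eq]
  exact (Summable.of_nonneg_of_le hnonneg hle hgeo.summable).tsum_le_tsum hle hgeo.summable

theorem stmt18 (p : ℝ) (hp0 : 0 ≤ p) (hp1 : p < 1) :
    ∀ t ∈ Set.Icc (0:ℝ) 1,
      (∑' n : ℕ, (dZ (2 ^ n * t)) ^ p / 2 ^ n) ≤
        (2 / (2 - 2 ^ p)) * (t * (1 - t) ^ p + (1 - t) * t ^ p) := by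
  intro t ht
  have hc : (0 : ℝ) ≤ 2 / (2 - 2 ^ p) :=
    div_nonneg zero_le_two (sub_nonneg.2 (Real.rpow_lt_self_of_one_lt one_lt_two hp1).le)
  calc ∑' n : ℕ, dZ (2 ^ n * t) ^ p / 2 ^ n
      ≤ min t (1 - t) ^ p * (2 / (2 - 2 ^ p)) := tsum_dZ_two_pow_mul_rpow_div_le ht hp0 hp1
    _ ≤ (t * (1 - t) ^ p + (1 - t) * t ^ p) * (2 / (2 - 2 ^ p)) := by
      gcongr
      exact min_rpow_le_mul_rpow_add_mul_rpow ht hp0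
    _ = (2 / (2 - 2 ^ p)) * (t * (1 - t) ^ p + (1 - t) * t ^ p) := mul_comm _ _
end
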